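/- If the curvature operator of the second kind R̊ is (n + (n−2)/n)-positive, then R has positive Ricci curvature: Ric(x,x) > 0 for all nonzero x ∈ V; if R̊ is (n + (n−2)/n)-nonnegative, then Ric(x,x) ≥ 0 for all x ∈ V. -/

import Mathlib

open scoped RealInnerProductSpace

noncomputable section

/-- The partial sum `λ₁ + ⋯ + λ_a` of the (sorted) values of `lam`, for a real index
`a`, i.e. `λ₁ + ⋯ + λ_⌊a⌋ + (a - ⌊a⌋)·λ_{⌊a⌋+1}`. -/
def psum {N : ℕ} (lam : Fin N → ℝ) (a : ℝ) : ℝ :=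
  (∑ i : Fin N, if (i : ℕ) < ⌊a⌋₊ then lam i else 0) +
    (a - (⌊a⌋₊ : ℝ)) * (if h : ⌊a⌋₊ < N then lam ⟨⌊a⌋₊, h⟩ else 0)

/-- The average of the values of `lam`. -/
def lamBar {N : ℕ} (lam : Fin N → ℝ) : ℝ := (∑ i, lam i) / (N : ℝ)

/-- The cone condition `C(a, θ)`: `a⁻¹(λ₁ + ⋯ + λ_a) ≥ -θ·λ̄`. -/
def inC {N : ℕ} (lam : Fin N → ℝ) (a θ : ℝ) : Prop :=
  -θ * lamBar lam ≤ a⁻¹ * psum lam a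

/-- The open cone condition `C̊(a, θ)`: `a⁻¹(λ₁ + ⋯ + λ_a) > -θ·λ̄`. -/
def inCint {N : ℕ} (lam : Fin N → ℝ) (a θ : ℝ) : Prop :=
  -θ * lamBar lam < a⁻¹ * psum lam a

variable {V : Type*} [NormedAddCommGroup V] [InnerProductSpace ℝ V]

/-- A quadrilinear form on `V`. -/
abbrev CurvMap (V : Type*) [NormedAddCommGroup V] [InnerProductSpace ℝ V] :=
  V →ₗ[ℝ] V →ₗ[ℝ] V →ₗ[ℝ] V →ₗ[ℝ] ℝ

/-- `R` is an algebraic curvature tensor. -/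
structure IsAlgCurv (R : CurvMap V) : Prop where
  antisymm : ∀ x y z w : V, R x y z w = - R y x z w
  pairSymm : ∀ x y z w : V, R x y z w = R z w x y
  bianchi : ∀ x y z w : V, R x y z w + R y z x w + R z x y w = 0

/-- The scalar curvature `S = Σ_{i,j} R_{ijij}` (w.r.t. the orthonormal basis `e`). -/
def scal {n : ℕ} (R : CurvMap V) (e : Fin n → V) : ℝ :=
  ∑ i, ∑ j, R (e i) (e j) (e i) (e j)

/-- The Ricci tensor `Ric(x,y) = Σ_i R(x, e_i, y, e_i)`. -/
def ric {n : ℕ} (R : CurvMap V) (e : Fin n → V) (x y : V) : ℝ :=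
  ∑ i, R x (e i) y (e i)

/-- The bilinear form `R̊(φ,ψ) = Σ_{i,j,k,l} R_{iklj} φ_{kl} ψ_{ij}` of the curvature
operator of the second kind, acting on components of two-tensors in the
orthonormal basis `e`. -/
def sok {n : ℕ} (R : CurvMap V) (e : Fin n → V) (φ ψ : Fin n → Fin n → ℝ) : ℝ :=
  ∑ i, ∑ j, ∑ k, ∑ l, R (e i) (e k) (e l) (e j) * φ k l * ψ i j

/-- The inner product `⟨φ,ψ⟩ = Σ_{i,j} φ_{ij} ψ_{ij}` on (components of) two-tensors. -/
def tip {n : ℕ} (φ ψ : Fin n → Fin n → ℝ) : ℝ := ∑ i, ∑ j, φ i j * ψ i j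

/-- `φ` is (the component matrix of) a symmetric traceless two-tensor. -/
def IsSymTr {n : ℕ} (φ : Fin n → Fin n → ℝ) : Prop :=
  (∀ i j, φ i j = φ j i) ∧ (∑ i, φ i i) = 0

/-- `lam` and `Φ` are the increasingly sorted eigenvalues, and corresponding
orthonormal eigentensors, of the curvature operator of the second kind of `R`
(expressed in components w.r.t. the orthonormal basis `e`). -/
def IsEigenSystem {n N : ℕ} (R : CurvMap V) (e : Fin n → V) (lam : Fin N → ℝ)
    (Φ : Fin N → Fin n → Fin n → ℝ) : Prop :=
  Monotone lam ∧ (∀ β, IsSymTr (Φ β)) ∧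
    (∀ β γ, tip (Φ β) (Φ γ) = if β = γ then 1 else 0) ∧
    (∀ β (ψ : Fin n → Fin n → ℝ), IsSymTr ψ → sok R e (Φ β) ψ = lam β * tip (Φ β) ψ)

/-- `R` has nonnegative isotropic curvature. -/
def NonnegIsotropic (R : CurvMap V) : Prop :=
  ∀ v : Fin 4 → V, Orthonormal ℝ v →
    0 ≤ R (v 0) (v 2) (v 0) (v 2) + R (v 0) (v 3) (v 0) (v 3) +
        R (v 1) (v 2) (v 1) (v 2) + R (v 1) (v 3) (v 1) (v 3) -
        2 * R (v 0) (v 1) (v 2) (v 3)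

/-- `R` has positive isotropic curvature. -/
def PosIsotropic (R : CurvMap V) : Prop :=
  ∀ v : Fin 4 → V, Orthonormal ℝ v →
    0 < R (v 0) (v 2) (v 0) (v 2) + R (v 0) (v 3) (v 0) (v 3) +
        R (v 1) (v 2) (v 1) (v 2) + R (v 1) (v 3) (v 1) (v 3) -
        2 * R (v 0) (v 1) (v 2) (v 3)


/-! ### Auxiliary lemmas -/

section Aux

lemma psum_le {N : ℕ} {lam : Fin N → ℝ} (hm : Monotone lam) (c : Fin N → ℝ)
    (h0 : ∀ β, 0 ≤ c β) (h1 : ∀ β, c β ≤ 1) {a : ℝ} (hsum : ∑ β, c β = a)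
    (hfl : ⌊a⌋₊ < N) :
    psum lam a ≤ ∑ β, c β * lam β := by
  set m := ⌊a⌋₊ with hm'
  set t := lam ⟨m, hfl⟩ with ht
  set d : Fin N → ℝ := fun β => if (β : ℕ) < m then 1 else if (β : ℕ) = m then a - m else 0
    with hd
  have hdsum : ∑ β, d β = a := by
    have h2 : ∑ β : Fin N, d β =
        ∑ β : Fin N, ((if (β : ℕ) < m then (1:ℝ) else 0) +
          (if (β : Fin N) = ⟨m, hfl⟩ then a - m else 0)) := by
      apply Finset.sum_congr rfl
      intro β _
      rcases lt_trichotomy (β : ℕ) m with h | h | h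
      · simp [hd, h, Fin.ext_iff, h.ne]
      · simp [hd, h, Fin.ext_iff, lt_irrefl]
      · simp [hd, Fin.ext_iff, h.ne', not_lt.2 h.le, (by omega : ¬ ((β:ℕ) < m))]
    rw [h2, Finset.sum_add_distrib, Finset.sum_ite_eq' Finset.univ (⟨m, hfl⟩ : Fin N)]
    have h3 : ∑ β : Fin N, (if (β : ℕ) < m then (1:ℝ) else 0) = m := by
      rw [Fin.sum_univ_eq_sum_range (fun i => if i < m then (1:ℝ) else 0)]
      rw [← Finset.sum_subset (Finset.range_subset_range.2 hfl.le)
        (fun x _ hx => if_neg (by simpa using hx))]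
      rw [Finset.sum_congr rfl (fun x hx => if_pos (Finset.mem_range.1 hx))]
      simp
    rw [h3]
    simp
  have hdlam : psum lam a = ∑ β, d β * lam β := by
    have h2 : ∀ β : Fin N, d β * lam β =
        (if (β : ℕ) < m then lam β else 0) +
        (if (β : Fin N) = ⟨m, hfl⟩ then (a - m) * t else 0) := by
      intro β
      rcases lt_trichotomy (β : ℕ) m with h | h | h
      · simp [hd, h, Fin.ext_iff, h.ne]
      · have : β = ⟨m, hfl⟩ := Fin.ext h
        simp [hd, h, this, lt_irrefl, ht]
      · simp [hd, Fin.ext_iff, h.ne', (by omega : ¬ ((β:ℕ) < m))]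
    rw [Finset.sum_congr rfl (fun β _ => h2 β), Finset.sum_add_distrib,
      Finset.sum_ite_eq' Finset.univ (⟨m, hfl⟩ : Fin N)]
    simp [psum, ← hm', hfl, ht]
  have key : 0 ≤ ∑ β, (c β - d β) * (lam β - t) := by
    apply Finset.sum_nonneg
    intro β _
    rcases lt_trichotomy (β : ℕ) m with h | h | h
    · have hd1 : d β = 1 := by simp [hd, h]
      have hlam : lam β ≤ t := hm (by simp [Fin.le_def, h.le])
      have : c β - d β ≤ 0 := by rw [hd1]; linarith [h1 β]
      nlinarith
    · have : β = ⟨m, hfl⟩ := Fin.ext h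
      simp [this, ht]
    · have hd0 : d β = 0 := by simp [hd, h.ne', h.le]
      have hlam : t ≤ lam β := hm (by simp only [Fin.mk_le_mk, Fin.le_def]; omega)
      exact mul_nonneg (by rw [hd0]; linarith [h0 β]) (by linarith)
  have expand : ∑ β, (c β - d β) * (lam β - t) =
      (∑ β, c β * lam β) - (∑ β, d β * lam β) - t * ((∑ β, c β) - (∑ β, d β)) := by
    simp only [sub_mul, mul_sub, Finset.sum_sub_distrib, Finset.mul_sum]
    simp [mul_comm]
  rw [hdlam]
  rw [expand, hsum, hdsum, sub_self, mul_zero, sub_zero] at key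
  linarith

def tipL {n : ℕ} (ψ : Fin n → Fin n → ℝ) : (Fin n → Fin n → ℝ) →ₗ[ℝ] ℝ where
  toFun φ := tip φ ψ
  map_add' φ φ' := by simp [tip, add_mul, Finset.sum_add_distrib]
  map_smul' c φ := by simp [tip, Finset.mul_sum, mul_assoc]

lemma tip_sum_left {n : ℕ} {ι : Type*} (s : Finset ι) (f : ι → Fin n → Fin n → ℝ)
    (c : ι → ℝ) (ψ : Fin n → Fin n → ℝ) :
    tip (∑ β ∈ s, c β • f β) ψ = ∑ β ∈ s, c β * tip (f β) ψ := by
  rw [show tip (∑ β ∈ s, c β • f β) ψ = tipL ψ (∑ β ∈ s, c β • f β) from rfl,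
    map_sum]
  exact Finset.sum_congr rfl fun β _ => by rw [map_smul]; rfl

lemma tip_comm {n : ℕ} (φ ψ : Fin n → Fin n → ℝ) : tip φ ψ = tip ψ φ := by
  unfold tip
  exact Finset.sum_congr rfl fun a _ => Finset.sum_congr rfl fun c _ => by ring

lemma tip_add_left {n : ℕ} (φ φ' ψ : Fin n → Fin n → ℝ) :
    tip (φ + φ') ψ = tip φ ψ + tip φ' ψ :=
  (tipL ψ).map_add φ φ'

lemma tip_sub_left {n : ℕ} (φ φ' ψ : Fin n → Fin n → ℝ) :
    tip (φ - φ') ψ = tip φ ψ - tip φ' ψ :=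
  (tipL ψ).map_sub φ φ'

lemma tip_add_right {n : ℕ} (φ ψ ψ' : Fin n → Fin n → ℝ) :
    tip φ (ψ + ψ') = tip φ ψ + tip φ ψ' := by
  rw [tip_comm, tip_add_left, tip_comm ψ φ, tip_comm ψ' φ]

lemma tip_sub_right {n : ℕ} (φ ψ ψ' : Fin n → Fin n → ℝ) :
    tip φ (ψ - ψ') = tip φ ψ - tip φ ψ' := by
  rw [tip_comm, tip_sub_left, tip_comm ψ φ, tip_comm ψ' φ]

lemma tip_smul_left {n : ℕ} (a : ℝ) (φ ψ : Fin n → Fin n → ℝ) :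
    tip (a • φ) ψ = a * tip φ ψ :=
  (tipL ψ).map_smul a φ

/-- Completeness: expansion of a symmetric traceless tensor in the eigenbasis. -/
lemma sym_expand {n N : ℕ} (hn : 3 ≤ n) (hN : 2 * N = (n - 1) * (n + 2))
    (Φ : Fin N → Fin n → Fin n → ℝ) (hsym : ∀ β, IsSymTr (Φ β))
    (horth : ∀ β γ, tip (Φ β) (Φ γ) = if β = γ then 1 else 0)
    (u : Fin n → Fin n → ℝ) (hu : IsSymTr u) :
    u = ∑ β, tip u (Φ β) • Φ β := by
  obtain ⟨m, rfl⟩ : ∃ m, n = m + 1 := ⟨n - 1, by omega⟩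
  set W : Submodule ℝ (Fin (m+1) → Fin (m+1) → ℝ) :=
    { carrier := {φ | IsSymTr φ}
      add_mem' := by
        rintro φ ψ ⟨hφ1, hφ2⟩ ⟨hψ1, hψ2⟩
        exact ⟨fun i j => by simp [hφ1 i j, hψ1 i j],
          by simp [Finset.sum_add_distrib, hφ2, hψ2]⟩
      zero_mem' := ⟨fun i j => rfl, by simp⟩
      smul_mem' := by
        rintro c φ ⟨h1, h2⟩
        exact ⟨fun i j => by simp [h1 i j], by simp [← Finset.mul_sum, h2]⟩ } with hW
  have hcardP : Fintype.card ((Σ i : Fin (m+1), Fin i.1) ⊕ Fin m) = N := by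
    have h1 : Fintype.card ((Σ i : Fin (m+1), Fin i.1) ⊕ Fin m)
        = (∑ i ∈ Finset.range (m+1), i) + m := by
      rw [Fintype.card_sum, Fintype.card_sigma]
      simp [Fin.sum_univ_eq_sum_range (fun i => i) (m+1)]
    have h3 : (∑ i ∈ Finset.range (m+1), i) * 2 = (m+1) * m :=
      Finset.sum_range_id_mul_two (m+1)
    have h4 : 2 * N = m * m + 3 * m := by
      rw [hN, show m + 1 - 1 = m from rfl]; ring
    have h5 : (∑ i ∈ Finset.range (m+1), i) * 2 = m * m + m := by rw [h3]; ring
    generalize m * m = q at h4 h5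
    omega
  set L : W →ₗ[ℝ] (((Σ i : Fin (m+1), Fin i.1) ⊕ Fin m) → ℝ) :=
    { toFun := fun φ p =>
        Sum.rec (fun s => φ.1 s.1 ⟨s.2.1, s.2.2.trans s.1.2⟩)
          (fun k => φ.1 k.castSucc k.castSucc) p
      map_add' := by intro φ ψ; funext p; cases p <;> rfl
      map_smul' := by intro c φ; funext p; cases p <;> rfl } with hL
  have hLinj : Function.Injective L := by
    rw [← LinearMap.ker_eq_bot, LinearMap.ker_eq_bot']
    intro φ hφ
    have hz : ∀ p : ((Σ i : Fin (m+1), Fin i.1) ⊕ Fin m), L φ p = 0 :=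
      fun p => congrFun hφ p
    obtain ⟨hsymφ, htrφ⟩ := φ.2
    have hlow : ∀ a b : Fin (m+1), (b:ℕ) < (a:ℕ) → φ.1 a b = 0 := by
      intro a b hab
      have := hz (Sum.inl ⟨a, ⟨b.1, hab⟩⟩)
      exact this
    have hdiag : ∀ k : Fin m, φ.1 k.castSucc k.castSucc = 0 := by
      intro k
      exact hz (Sum.inr k)
    have hlast : φ.1 (Fin.last m) (Fin.last m) = 0 := by
      have := htrφ
      rw [Fin.sum_univ_castSucc] at this
      simpa [Finset.sum_congr rfl (fun k _ => hdiag k)] using this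
    apply Subtype.ext
    funext a b
    rcases lt_trichotomy (b:ℕ) (a:ℕ) with h | h | h
    · exact hlow a b h
    · have hab : a = b := Fin.ext h.symm
      subst hab
      rcases eq_or_ne a (Fin.last m) with h' | h'
      · rw [h']; exact hlast
      · have : (a:ℕ) < m := by
          rcases Fin.eq_castSucc_or_eq_last a with ⟨k, rfl⟩ | h''
          · exact k.2
          · exact absurd h'' h'
        have hd2 := hdiag ⟨a.1, this⟩
        have hcast : (Fin.castSucc ⟨a.1, this⟩) = a := by ext; rfl
        rwa [hcast] at hd2
    · rw [hsymφ a b]; exact hlow b a h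
  have hrankW : Module.finrank ℝ W ≤ N := by
    calc Module.finrank ℝ W
        ≤ Module.finrank ℝ ((((Σ i : Fin (m+1), Fin i.1) ⊕ Fin m)) → ℝ) :=
          LinearMap.finrank_le_finrank_of_injective hLinj
    _ = N := by simp [hcardP]
  have hind : LinearIndependent ℝ Φ := by
    rw [Fintype.linearIndependent_iff]
    intro c hc γ
    have h4 := congrArg (fun v => tip v (Φ γ)) hc
    rw [tip_sum_left] at h4
    simp only [horth] at h4
    simpa [tip, mul_ite, mul_one, mul_zero, Finset.sum_ite_eq'] using h4
  have hspan : Submodule.span ℝ (Set.range Φ) = W := by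
    have hle : Submodule.span ℝ (Set.range Φ) ≤ W := by
      rw [Submodule.span_le]; rintro _ ⟨β, rfl⟩; exact hsym β
    have hfr : Module.finrank ℝ (Submodule.span ℝ (Set.range Φ)) = N := by
      rw [finrank_span_eq_card hind, Fintype.card_fin]
    exact Submodule.eq_of_le_of_finrank_le hle (by rw [hfr]; exact hrankW) |>.symm |>.symm
  have hW' : u ∈ Submodule.span ℝ (Set.range Φ) := by rw [hspan]; exact hu
  obtain ⟨c, hc⟩ := (Submodule.mem_span_range_iff_exists_fun ℝ).1 hW'
  have hcoef : ∀ γ, tip u (Φ γ) = c γ := by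
    intro γ
    rw [← hc, tip_sum_left]
    simp [horth, mul_ite, mul_one, mul_zero, Finset.sum_ite_eq']
  calc u = ∑ β, c β • Φ β := hc.symm
    _ = ∑ β, tip u (Φ β) • Φ β :=
      Finset.sum_congr rfl fun β _ => by rw [hcoef β]

variable {n : ℕ}

lemma aux_parseval (b : OrthonormalBasis (Fin n) ℝ V) (v w : V) :
    ∑ a, ⟪v, b a⟫ * ⟪w, b a⟫ = ⟪v, w⟫ := by
  have := b.sum_inner_mul_inner v w
  simpa [real_inner_comm] using this

lemma inner_bb (b : OrthonormalBasis (Fin n) ℝ V) (a c : Fin n) :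
    ⟪b a, b c⟫ = if a = c then (1:ℝ) else 0 := by
  rcases eq_or_ne a c with rfl | h
  · simp [real_inner_self_eq_norm_sq, b.orthonormal.1 a]
  · simp [h, b.orthonormal.2 h]

lemma bilin_expand (B : V →ₗ[ℝ] V →ₗ[ℝ] ℝ) (b : OrthonormalBasis (Fin n) ℝ V) (v w : V) :
    B v w = ∑ a, ∑ c, ⟪b a, v⟫ * (⟪b c, w⟫ * B (b a) (b c)) := by
  conv_lhs => rw [← b.sum_repr' v, ← b.sum_repr' w]
  simp only [map_sum, map_smul, LinearMap.coe_sum, Finset.sum_apply,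
    LinearMap.smul_apply, smul_eq_mul, Finset.mul_sum]
  rw [Finset.sum_comm]
  refine Finset.sum_congr rfl fun a _ => Finset.sum_congr rfl fun c _ => by ring

lemma trace_indep (B : V →ₗ[ℝ] V →ₗ[ℝ] ℝ) (b g : OrthonormalBasis (Fin n) ℝ V) :
    ∑ i, B (g i) (g i) = ∑ i, B (b i) (b i) := by
  have h1 : ∀ i, B (g i) (g i) = ∑ a, ∑ c, ⟪b a, g i⟫ * (⟪b c, g i⟫ * B (b a) (b c)) :=
    fun i => bilin_expand B b (g i) (g i)
  rw [Finset.sum_congr rfl (fun i _ => h1 i)]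
  rw [Finset.sum_comm]
  apply Finset.sum_congr rfl; intro a _
  rw [Finset.sum_comm]
  have h2 : ∀ c, ∑ i, ⟪b a, g i⟫ * (⟪b c, g i⟫ * B (b a) (b c))
      = (∑ i, ⟪b a, g i⟫ * ⟪b c, g i⟫) * B (b a) (b c) := by
    intro c
    rw [Finset.sum_mul]
    exact Finset.sum_congr rfl fun i _ => by ring
  rw [Finset.sum_congr rfl (fun c _ => h2 c)]
  have h3 : ∀ c, (∑ i, ⟪b a, g i⟫ * ⟪b c, g i⟫) = if a = c then (1:ℝ) else 0 := by
    intro c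
    rw [aux_parseval g (b a) (b c), inner_bb]
  rw [Finset.sum_congr rfl (fun c _ => by rw [h3 c])]
  simp

def rk (e : Fin n → V) (p q : V) : Fin n → Fin n → ℝ := fun a c => ⟪p, e a⟫ * ⟪q, e c⟫

lemma tip_rk (b : OrthonormalBasis (Fin n) ℝ V) (p q r s : V) :
    tip (rk ⇑b p q) (rk ⇑b r s) = ⟪p, r⟫ * ⟪q, s⟫ := by
  rw [← aux_parseval b p r, ← aux_parseval b q s, Finset.sum_mul_sum]
  exact Finset.sum_congr rfl fun a _ => Finset.sum_congr rfl fun c _ => by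
    simp [rk]; ring

lemma sok_rk (R : CurvMap V) (b : OrthonormalBasis (Fin n) ℝ V) (p q r s : V) :
    sok R ⇑b (rk ⇑b p q) (rk ⇑b r s) = R r p q s := by
  conv_rhs => rw [← b.sum_repr' r, ← b.sum_repr' p, ← b.sum_repr' q, ← b.sum_repr' s]
  simp only [map_sum, map_smul, LinearMap.coe_sum, Finset.sum_apply,
    LinearMap.smul_apply, smul_eq_mul, Finset.mul_sum]
  unfold sok rk
  conv_lhs =>
    rw [Finset.sum_comm]
    enter [2, j]
    rw [Finset.sum_comm]
    enter [2, k]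
    rw [Finset.sum_comm]
  conv_lhs =>
    enter [2, j]
    rw [Finset.sum_comm]
  apply Finset.sum_congr rfl; intro a _
  apply Finset.sum_congr rfl; intro c _
  apply Finset.sum_congr rfl; intro d _
  apply Finset.sum_congr rfl; intro f _
  rw [real_inner_comm (b a) s, real_inner_comm (b c) q, real_inner_comm (b d) p,
    real_inner_comm (b f) r]
  ring

lemma stageA (b g : OrthonormalBasis (Fin n) ℝ V) (v : Fin n → ℝ) :
    ∑ k, (∑ a, ⟪g k, b a⟫ * v a)^2 = ∑ a, (v a)^2 := by
  have h1 : ∀ k, (∑ a, ⟪g k, b a⟫ * v a)^2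
      = ∑ a, ∑ c, ⟪g k, b a⟫ * ⟪g k, b c⟫ * (v a * v c) := by
    intro k; rw [sq, Finset.sum_mul_sum]
    exact Finset.sum_congr rfl fun a _ => Finset.sum_congr rfl fun c _ => by ring
  rw [Finset.sum_congr rfl fun k _ => h1 k, Finset.sum_comm]
  apply Finset.sum_congr rfl; intro a _
  rw [Finset.sum_comm]
  have h2 : ∀ c, ∑ k, ⟪g k, b a⟫ * ⟪g k, b c⟫ * (v a * v c)
      = (∑ k, ⟪b a, g k⟫ * ⟪b c, g k⟫) * (v a * v c) := by
    intro c; rw [Finset.sum_mul]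
    exact Finset.sum_congr rfl fun k _ => by rw [real_inner_comm (g k) (b a),
      real_inner_comm (g k) (b c)]
  rw [Finset.sum_congr rfl fun c _ => h2 c]
  have h3 : ∀ c, (∑ k, ⟪b a, g k⟫ * ⟪b c, g k⟫) = if a = c then (1:ℝ) else 0 := by
    intro c; rw [aux_parseval g (b a) (b c), inner_bb]
  rw [Finset.sum_congr rfl fun c _ => by rw [h3 c]]
  simp [sq]

lemma frob (b g : OrthonormalBasis (Fin n) ℝ V) (φ : Fin n → Fin n → ℝ) :
    ∑ k, ∑ l, (tip (rk ⇑b (g k) (g l)) φ)^2 = tip φ φ := by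
  have hT : ∀ k l, tip (rk ⇑b (g k) (g l)) φ
      = ∑ a, ⟪g k, b a⟫ * (∑ c, ⟪g l, b c⟫ * φ a c) := by
    intro k l
    unfold tip rk
    exact Finset.sum_congr rfl fun a _ => by
      rw [Finset.mul_sum]
      exact Finset.sum_congr rfl fun c _ => by ring
  calc ∑ k, ∑ l, (tip (rk ⇑b (g k) (g l)) φ)^2
      = ∑ l, ∑ k, (∑ a, ⟪g k, b a⟫ * (∑ c, ⟪g l, b c⟫ * φ a c))^2 := by
        rw [Finset.sum_comm]
        exact Finset.sum_congr rfl fun l _ => Finset.sum_congr rfl fun k _ => by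
          rw [hT k l]
    _ = ∑ l, ∑ a, (∑ c, ⟪g l, b c⟫ * φ a c)^2 :=
        Finset.sum_congr rfl fun l _ => stageA b g _
    _ = ∑ a, ∑ l, (∑ c, ⟪g l, b c⟫ * φ a c)^2 := Finset.sum_comm
    _ = ∑ a, ∑ c, (φ a c)^2 := Finset.sum_congr rfl fun a _ => stageA b g _
    _ = tip φ φ := by
        unfold tip
        exact Finset.sum_congr rfl fun a _ => Finset.sum_congr rfl fun c _ => (sq _)

lemma sok_add_left (R : CurvMap V) (e : Fin n → V) (φ φ' ψ : Fin n → Fin n → ℝ) :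
    sok R e (φ + φ') ψ = sok R e φ ψ + sok R e φ' ψ := by
  simp [sok, Pi.add_apply, mul_add, add_mul, Finset.sum_add_distrib]

lemma sok_sub_left (R : CurvMap V) (e : Fin n → V) (φ φ' ψ : Fin n → Fin n → ℝ) :
    sok R e (φ - φ') ψ = sok R e φ ψ - sok R e φ' ψ := by
  simp [sok, Pi.sub_apply, mul_sub, sub_mul, Finset.sum_sub_distrib]

lemma sok_add_right (R : CurvMap V) (e : Fin n → V) (φ ψ ψ' : Fin n → Fin n → ℝ) :
    sok R e φ (ψ + ψ') = sok R e φ ψ + sok R e φ ψ' := by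
  simp [sok, Pi.add_apply, mul_add, add_mul, Finset.sum_add_distrib]

lemma sok_sub_right (R : CurvMap V) (e : Fin n → V) (φ ψ ψ' : Fin n → Fin n → ℝ) :
    sok R e φ (ψ - ψ') = sok R e φ ψ - sok R e φ ψ' := by
  simp [sok, Pi.sub_apply, mul_sub, sub_mul, Finset.sum_sub_distrib]

def sokL (R : CurvMap V) (e : Fin n → V) (ψ : Fin n → Fin n → ℝ) :
    (Fin n → Fin n → ℝ) →ₗ[ℝ] ℝ where
  toFun φ := sok R e φ ψ
  map_add' φ φ' := sok_add_left R e φ φ' ψ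
  map_smul' c φ := by
    simp only [RingHom.id_apply, smul_eq_mul, sok, Pi.smul_apply, Finset.mul_sum]
    exact Finset.sum_congr rfl fun i _ => Finset.sum_congr rfl fun j _ =>
      Finset.sum_congr rfl fun k _ => Finset.sum_congr rfl fun l _ => by ring

lemma sok_sum_left (R : CurvMap V) (e : Fin n → V) {ι : Type*} (s : Finset ι)
    (f : ι → Fin n → Fin n → ℝ) (c : ι → ℝ) (ψ : Fin n → Fin n → ℝ) :
    sok R e (∑ β ∈ s, c β • f β) ψ = ∑ β ∈ s, c β * sok R e (f β) ψ := by
  rw [show sok R e (∑ β ∈ s, c β • f β) ψ = sokL R e ψ (∑ β ∈ s, c β • f β) from rfl,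
    map_sum]
  exact Finset.sum_congr rfl fun β _ => by rw [map_smul]; rfl

lemma tip_rk_bb (b : OrthonormalBasis (Fin n) ℝ V) (φ : Fin n → Fin n → ℝ)
    (a c : Fin n) : tip (rk ⇑b (b a) (b c)) φ = φ a c := by
  unfold tip rk
  simp [inner_bb b, ite_mul, one_mul, zero_mul, Finset.sum_ite_eq]

def rkT (b : OrthonormalBasis (Fin n) ℝ V) (φ : Fin n → Fin n → ℝ) :
    V →ₗ[ℝ] V →ₗ[ℝ] ℝ :=
  LinearMap.mk₂ ℝ (fun v w => tip (rk ⇑b v w) φ)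
    (fun v v' w => by
      show tip (rk ⇑b (v + v') w) φ = tip (rk ⇑b v w) φ + tip (rk ⇑b v' w) φ
      have h : rk ⇑b (v + v') w = rk ⇑b v w + rk ⇑b v' w := by
        funext a c; simp [rk, inner_add_left]; ring
      rw [h, tip_add_left])
    (fun a v w => by
      show tip (rk ⇑b (a • v) w) φ = a • tip (rk ⇑b v w) φ
      have h : rk ⇑b (a • v) w = a • rk ⇑b v w := by
        funext a' c; simp [rk, real_inner_smul_left]; ring
      rw [h, tip_smul_left]; rfl)
    (fun v w w' => by
      show tip (rk ⇑b v (w + w')) φ = tip (rk ⇑b v w) φ + tip (rk ⇑b v w') φ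
      have h : rk ⇑b v (w + w') = rk ⇑b v w + rk ⇑b v w' := by
        funext a c; simp [rk, inner_add_left]; ring
      rw [h, tip_add_left])
    (fun a v w => by
      show tip (rk ⇑b v (a • w)) φ = a • tip (rk ⇑b v w) φ
      have h : rk ⇑b v (a • w) = a • rk ⇑b v w := by
        funext a' c; simp [rk, real_inner_smul_left]; ring
      rw [h, tip_smul_left]; rfl)

def ricB (R : CurvMap V) (x : V) : V →ₗ[ℝ] V →ₗ[ℝ] ℝ :=
  LinearMap.mk₂ ℝ (fun v w => R x v x w)
    (fun v v' w => by simp [map_add, LinearMap.add_apply])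
    (fun a v w => by simp [map_smul, LinearMap.smul_apply])
    (fun v w w' => by simp [map_add, LinearMap.add_apply])
    (fun a v w => by simp [map_smul, LinearMap.smul_apply])

lemma curv_zero12 {R : CurvMap V} (hR : IsAlgCurv R) (a c d : V) : R a a c d = 0 := by
  have := hR.antisymm a a c d
  linarith

lemma curv_anti34 {R : CurvMap V} (hR : IsAlgCurv R) (a b c d : V) :
    R a b c d = - R a b d c := by
  calc R a b c d = R c d a b := hR.pairSymm a b c d
    _ = - R d c a b := hR.antisymm c d a b
    _ = - R a b d c := by rw [hR.pairSymm d c a b]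

lemma curv_flip {R : CurvMap V} (hR : IsAlgCurv R) (a b : V) :
    R a b a b = R b a b a := by
  calc R a b a b = - R b a a b := hR.antisymm a b a b
    _ = - (- R b a b a) := by rw [curv_anti34 hR b a a b]
    _ = R b a b a := by ring

lemma ric_smul (R : CurvMap V) (e : Fin n → V) (a : ℝ) (y : V) :
    ric R e (a • y) (a • y) = a^2 * ric R e y y := by
  unfold ric
  rw [Finset.mul_sum]
  refine Finset.sum_congr rfl fun i _ => ?_
  simp only [map_smul, LinearMap.smul_apply, smul_eq_mul]
  ring

end Aux

set_option maxHeartbeats 1000000 in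
/-- if the curvature operator of the second kind is
`(n + (n−2)/n)`-positive, then `R` has positive Ricci curvature; if it is
`(n + (n−2)/n)`-nonnegative, then `R` has nonnegative Ricci curvature. -/
theorem stmt_6 {V : Type*} [NormedAddCommGroup V] [InnerProductSpace ℝ V]
    [FiniteDimensional ℝ V]
    (n : ℕ) (hn : 3 ≤ n) (hdim : Module.finrank ℝ V = n)
    (e : Fin n → V) (he : Orthonormal ℝ e)
    (R : CurvMap V) (hR : IsAlgCurv R)
    (N : ℕ) (hN : 2 * N = (n - 1) * (n + 2))
    (lam : Fin N → ℝ) (Φ : Fin N → Fin n → Fin n → ℝ)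
    (hE : IsEigenSystem R e lam Φ) :
    (0 < psum lam ((n : ℝ) + ((n : ℝ) - 2) / (n : ℝ)) →
      ∀ x : V, x ≠ 0 → 0 < ric R e x x) ∧
    (0 ≤ psum lam ((n : ℝ) + ((n : ℝ) - 2) / (n : ℝ)) →
      ∀ x : V, 0 ≤ ric R e x x) := by
  obtain ⟨m, rfl⟩ : ∃ m, n = m + 1 := ⟨n - 1, by omega⟩
  have hm2 : 2 ≤ m := by omega
  have hcard : Module.finrank ℝ V = Fintype.card (Fin (m+1)) := by simp [hdim]
  obtain ⟨b, hb⟩ :=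
    Orthonormal.exists_orthonormalBasis_extension_of_card_eq (𝕜 := ℝ) hcard
      (v := e) (s := Set.univ)
      (by exact he.comp (Subtype.val) Subtype.val_injective)
  have hbe : ⇑b = e := funext fun i => hb i (Set.mem_univ i)
  subst hbe
  obtain ⟨hmono, hsymΦ, horthΦ, heig⟩ := hE
  have hNcast : 2 * N = m * (m + 3) := by
    rw [show m + 1 - 1 = m from rfl] at hN
    rw [hN]
  have hNpos : 0 < N := by
    have h10 : 2 * 5 ≤ m * (m + 3) := Nat.mul_le_mul hm2 (by omega)
    omega
  have hexp : ∀ w, IsSymTr w → w = ∑ β, tip w (Φ β) • Φ β :=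
    fun w hw => sym_expand (by omega) hN Φ hsymΦ horthΦ w hw
  have par_Phi : ∀ w, IsSymTr w → ∑ β, (tip w (Φ β))^2 = tip w w := by
    intro w hw
    calc ∑ β, (tip w (Φ β))^2 = ∑ β, tip w (Φ β) * tip (Φ β) w := by
          exact Finset.sum_congr rfl fun β _ => by rw [sq, tip_comm w (Φ β)]
      _ = tip (∑ β, tip w (Φ β) • Φ β) w := (tip_sum_left _ _ _ _).symm
      _ = tip w w := by rw [← hexp w hw]
  have sok_Phi : ∀ w, IsSymTr w → ∑ β, lam β * (tip w (Φ β))^2 = sok R ⇑b w w := by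
    intro w hw
    calc ∑ β, lam β * (tip w (Φ β))^2
        = ∑ β, tip w (Φ β) * sok R ⇑b (Φ β) w := by
          refine Finset.sum_congr rfl fun β _ => ?_
          rw [heig β w hw, tip_comm (Φ β) w]; ring
      _ = sok R ⇑b (∑ β, tip w (Φ β) • Φ β) w := (sok_sum_left _ _ _ _ _ _).symm
      _ = sok R ⇑b w w := by rw [← hexp w hw]
  have main : ∀ x : V, ‖x‖ = 1 →
      psum lam ((↑(m+1) : ℝ) + ((↑(m+1) : ℝ) - 2) / (↑(m+1) : ℝ))
        ≤ (1 + 2 / ((m : ℝ) + 1)) * ric R ⇑b x x := by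
    intro x hx
    have hxx : ⟪x, x⟫ = 1 := by
      rw [real_inner_self_eq_norm_sq, hx]; norm_num
    obtain ⟨g, hg⟩ :=
      Orthonormal.exists_orthonormalBasis_extension_of_card_eq (𝕜 := ℝ) hcard
        (v := fun _ : Fin (m+1) => x) (s := {Fin.last m})
        (by
          constructor
          · intro i; simpa using hx
          · intro i j hij
            exact absurd (Subtype.ext ((Set.mem_singleton_iff.1 i.2).trans
              (Set.mem_singleton_iff.1 j.2).symm)) hij)
    have hgx : g (Fin.last m) = x := hg _ rfl
    set f : Fin m → V := fun i => g i.castSucc with hf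
    have hfx : ∀ i, ⟪f i, x⟫ = 0 := by
      intro i
      rw [← hgx, hf]
      exact g.orthonormal.2 (Fin.castSucc_lt_last i).ne
    have hxf : ∀ i, ⟪x, f i⟫ = 0 := fun i => by rw [real_inner_comm]; exact hfx i
    have hff : ∀ i j : Fin m, ⟪f i, f j⟫ = if i = j then (1:ℝ) else 0 := by
      intro i j
      rw [hf]
      simp only []
      rw [inner_bb g]
      simp [Fin.castSucc_inj]
    set hM : Fin m → Fin (m+1) → Fin (m+1) → ℝ :=
      fun i => rk ⇑b (f i) x + rk ⇑b x (f i) with hhM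
    set uM : Fin m → Fin (m+1) → Fin (m+1) → ℝ :=
      fun i => rk ⇑b (f i) (f i) - rk ⇑b x x with huM
    have hsymh : ∀ i, IsSymTr (hM i) := by
      intro i
      constructor
      · intro a c; simp only [hhM, Pi.add_apply, rk]; ring
      · simp only [hhM, Pi.add_apply, rk, Finset.sum_add_distrib]
        rw [aux_parseval b (f i) x, aux_parseval b x (f i), hfx i, hxf i]
        norm_num
    have hsymu : ∀ i, IsSymTr (uM i) := by
      intro i
      constructor
      · intro a c; simp only [huM, Pi.sub_apply, rk]; ring
      · simp only [huM, Pi.sub_apply, rk, Finset.sum_sub_distrib]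
        rw [aux_parseval b (f i) (f i), aux_parseval b x x, hxx]
        have := hff i i
        rw [if_pos rfl] at this
        rw [this]
        norm_num
    set c : Fin N → ℝ := fun β =>
      (1/2) * ∑ i, (tip (hM i) (Φ β))^2
        + (1/((m:ℝ)+1)) * ∑ i, (tip (uM i) (Φ β))^2 with hcdef
    have hc0 : ∀ β, 0 ≤ c β := by
      intro β
      have h1 : (0:ℝ) ≤ ∑ i, (tip (hM i) (Φ β))^2 :=
        Finset.sum_nonneg fun i _ => sq_nonneg _
      have h2 : (0:ℝ) ≤ ∑ i, (tip (uM i) (Φ β))^2 :=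
        Finset.sum_nonneg fun i _ => sq_nonneg _
      have hm1 : (0:ℝ) < (m:ℝ) + 1 := by positivity
      rw [hcdef]
      have := mul_nonneg (le_of_lt (by positivity : (0:ℝ) < 1/((m:ℝ)+1))) h2
      nlinarith
    have htiph : ∀ i, tip (hM i) (hM i) = 2 := by
      intro i
      rw [hhM]
      simp only []
      rw [tip_add_left, tip_add_right, tip_add_right, tip_rk, tip_rk, tip_rk, tip_rk,
        hxx, hfx i, hxf i]
      have := hff i i
      rw [if_pos rfl] at this
      rw [this]
      ring
    have htipu : ∀ i, tip (uM i) (uM i) = 2 := by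
      intro i
      rw [huM]
      simp only []
      rw [tip_sub_left, tip_sub_right, tip_sub_right, tip_rk, tip_rk, tip_rk, tip_rk,
        hxx, hfx i, hxf i]
      have := hff i i
      rw [if_pos rfl] at this
      rw [this]
      ring
    have hcsum : ∑ β, c β = (↑(m+1) : ℝ) + ((↑(m+1) : ℝ) - 2) / (↑(m+1) : ℝ) := by
      have h1 : ∑ β, c β = (1/2) * ∑ i, tip (hM i) (hM i)
          + (1/((m:ℝ)+1)) * ∑ i, tip (uM i) (uM i) := by
        rw [Finset.sum_add_distrib, ← Finset.mul_sum, ← Finset.mul_sum]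
        congr 1
        · congr 1
          rw [Finset.sum_comm]
          exact Finset.sum_congr rfl fun i _ => par_Phi (hM i) (hsymh i)
        · congr 1
          rw [Finset.sum_comm]
          exact Finset.sum_congr rfl fun i _ => par_Phi (uM i) (hsymu i)
      rw [h1, Finset.sum_congr rfl fun i _ => htiph i,
        Finset.sum_congr rfl fun i _ => htipu i]
      simp only [Finset.sum_const, Finset.card_univ, Fintype.card_fin, nsmul_eq_mul]
      have hm1 : ((m:ℝ)+1) ≠ 0 := by positivity
      push_cast
      field_simp
      ring
    have hc1 : ∀ β, c β ≤ 1 := by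
      intro β
      obtain ⟨hφs, hφt⟩ := hsymΦ β
      have hφn : tip (Φ β) (Φ β) = 1 := by simpa using horthΦ β β
      set T : Fin (m+1) → Fin (m+1) → ℝ :=
        fun k l => tip (rk ⇑b (g k) (g l)) (Φ β) with hT
      have hTsym : ∀ k l, T k l = T l k := by
        intro k l
        simp only [hT, tip, rk]
        rw [Finset.sum_comm]
        refine Finset.sum_congr rfl fun a _ => Finset.sum_congr rfl fun c' _ => ?_
        rw [hφs c' a]; ring
      have hTnorm : ∑ k, ∑ l, (T k l)^2 = 1 := by
        simp only [hT]
        rw [frob b g (Φ β), hφn]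
      have hTtr : ∑ k, T k k = 0 := by
        have h2 : ∑ k, (rkT b (Φ β)) (g k) (g k) = ∑ a, (rkT b (Φ β)) (b a) (b a) :=
          trace_indep (rkT b (Φ β)) b g
        have h3 : ∀ k, (rkT b (Φ β)) (g k) (g k) = T k k := fun k => rfl
        have h4 : ∀ a, (rkT b (Φ β)) (b a) (b a) = Φ β a a := fun a => tip_rk_bb b (Φ β) a a
        rw [Finset.sum_congr rfl fun k _ => h3 k] at h2
        rw [Finset.sum_congr rfl fun a _ => h4 a] at h2
        rw [h2, hφt]
      set dd : Fin m → ℝ := fun i => T i.castSucc i.castSucc with hdd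
      set t := T (Fin.last m) (Fin.last m) with htt
      set mm : Fin m → ℝ := fun i => T i.castSucc (Fin.last m) with hmm
      have htr2 : ∑ i, dd i + t = 0 := by
        rw [← hTtr, Fin.sum_univ_castSucc (f := fun k => T k k)]
      have hdec : ∑ k, ∑ l, (T k l)^2
          = (∑ i : Fin m, (∑ j : Fin m, (T i.castSucc j.castSucc)^2
              + (T i.castSucc (Fin.last m))^2))
            + (∑ j : Fin m, (T (Fin.last m) j.castSucc)^2 + t^2) := by
        rw [Fin.sum_univ_castSucc (f := fun k => ∑ l, (T k l)^2)]
        congr 1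
        · exact Finset.sum_congr rfl fun i _ => by
            rw [Fin.sum_univ_castSucc (f := fun l => (T i.castSucc l)^2)]
        · rw [Fin.sum_univ_castSucc (f := fun l => (T (Fin.last m) l)^2)]
      have hnorm2 : ∑ i, (dd i)^2 + 2 * ∑ i, (mm i)^2 + t^2 ≤ 1 := by
        rw [← hTnorm, hdec]
        have h6 : ∀ i : Fin m, (T i.castSucc i.castSucc)^2
            ≤ ∑ j : Fin m, (T i.castSucc j.castSucc)^2 := by
          intro i
          refine Finset.single_le_sum (fun j _ => sq_nonneg (T i.castSucc j.castSucc))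
            (Finset.mem_univ i)
        have h5 : ∀ i : Fin m, (dd i)^2 + (mm i)^2
            ≤ ∑ j : Fin m, (T i.castSucc j.castSucc)^2
              + (T i.castSucc (Fin.last m))^2 := by
          intro i
          have h6i := h6 i
          simp only [hdd, hmm]
          linarith
        have h7 : ∑ i : Fin m, ((dd i)^2 + (mm i)^2)
            ≤ ∑ i : Fin m, (∑ j : Fin m, (T i.castSucc j.castSucc)^2
              + (T i.castSucc (Fin.last m))^2) :=
          Finset.sum_le_sum fun i _ => h5 i
        have h8 : ∑ j : Fin m, (T (Fin.last m) j.castSucc)^2 = ∑ j : Fin m, (mm j)^2 :=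
          Finset.sum_congr rfl fun j _ => by rw [hTsym]
        rw [h8]
        rw [Finset.sum_add_distrib] at h7
        linarith
      have hCS : t^2 ≤ (m:ℝ) * ∑ i, (dd i)^2 := by
        have h3 : t = -∑ i, dd i := by linarith
        rw [h3, neg_sq]
        have h9 := sq_sum_le_card_mul_sum_sq (s := (Finset.univ : Finset (Fin m)))
          (f := dd)
        simpa using h9
      have hth : ∀ i, tip (hM i) (Φ β) = 2 * mm i := by
        intro i
        have e1 : hM i = rk ⇑b (g i.castSucc) (g (Fin.last m))
            + rk ⇑b (g (Fin.last m)) (g i.castSucc) := by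
          rw [hhM]; simp only [hf, hgx]
        rw [e1, tip_add_left]
        have e2 : tip (rk ⇑b (g (Fin.last m)) (g i.castSucc)) (Φ β)
            = T (Fin.last m) i.castSucc := rfl
        have e3 : tip (rk ⇑b (g i.castSucc) (g (Fin.last m))) (Φ β)
            = T i.castSucc (Fin.last m) := rfl
        rw [e2, e3, hTsym (Fin.last m) i.castSucc]
        simp only [hmm]
        ring
      have htu : ∀ i, tip (uM i) (Φ β) = dd i - t := by
        intro i
        have e1 : uM i = rk ⇑b (g i.castSucc) (g i.castSucc)
            - rk ⇑b (g (Fin.last m)) (g (Fin.last m)) := by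
          rw [huM]; simp only [hf, hgx]
        rw [e1, tip_sub_left]
      show (1/2) * ∑ i, (tip (hM i) (Φ β))^2
          + (1/((m:ℝ)+1)) * ∑ i, (tip (uM i) (Φ β))^2 ≤ 1
      have e4 : ∑ i, (tip (hM i) (Φ β))^2 = ∑ i, (2 * mm i)^2 :=
        Finset.sum_congr rfl fun i _ => by rw [hth i]
      have e5 : ∑ i, (tip (uM i) (Φ β))^2 = ∑ i, (dd i - t)^2 :=
        Finset.sum_congr rfl fun i _ => by rw [htu i]
      rw [e4, e5]
      have hsq : ∑ i, (2 * mm i)^2 = 4 * ∑ i, (mm i)^2 := by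
        rw [Finset.mul_sum]
        refine Finset.sum_congr rfl fun i _ => ?_
        ring
      have hsub : ∑ i, (dd i - t)^2 = ∑ i, (dd i)^2 + ((m:ℝ) + 2) * t^2 := by
        have h10 : ∀ i : Fin m, (dd i - t)^2 = (dd i)^2 - 2*t*(dd i) + t^2 :=
          fun i => by ring
        rw [Finset.sum_congr rfl fun i _ => h10 i]
        rw [Finset.sum_add_distrib, Finset.sum_sub_distrib, ← Finset.mul_sum]
        have hdt : ∑ i, dd i = -t := by linarith
        rw [hdt]
        simp only [Finset.sum_const, Finset.card_univ, Fintype.card_fin, nsmul_eq_mul]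
        ring
      rw [hsq, hsub]
      have hm1 : (0:ℝ) < (m:ℝ) + 1 := by positivity
      have h11 : (1/((m:ℝ)+1)) * (∑ i, (dd i)^2 + ((m:ℝ)+2) * t^2)
          ≤ ∑ i, (dd i)^2 + t^2 := by
        rw [one_div, inv_mul_eq_div, div_le_iff₀ hm1]
        nlinarith [hCS]
      linarith
    have hclam : ∑ β, c β * lam β = (1 + 2/((m:ℝ)+1)) * ric R ⇑b x x := by
      have h1 : ∑ β, c β * lam β
          = (1/2) * ∑ i, sok R ⇑b (hM i) (hM i)
            + (1/((m:ℝ)+1)) * ∑ i, sok R ⇑b (uM i) (uM i) := by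
        have h2 : ∀ β, c β * lam β
            = (1/2) * (∑ i, lam β * (tip (hM i) (Φ β))^2)
              + (1/((m:ℝ)+1)) * (∑ i, lam β * (tip (uM i) (Φ β))^2) := by
          intro β
          rw [hcdef]
          simp only [← Finset.mul_sum]
          ring
        rw [Finset.sum_congr rfl fun β _ => h2 β, Finset.sum_add_distrib,
          ← Finset.mul_sum, ← Finset.mul_sum]
        congr 1
        · congr 1
          rw [Finset.sum_comm]
          exact Finset.sum_congr rfl fun i _ => sok_Phi (hM i) (hsymh i)
        · congr 1
          rw [Finset.sum_comm]
          exact Finset.sum_congr rfl fun i _ => sok_Phi (uM i) (hsymu i)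
      have hsokh : ∀ i, sok R ⇑b (hM i) (hM i) = 2 * R x (f i) x (f i) := by
        intro i
        rw [hhM]
        simp only []
        rw [sok_add_left, sok_add_right, sok_add_right, sok_rk, sok_rk, sok_rk, sok_rk]
        rw [curv_zero12 hR (f i) x x, curv_zero12 hR x (f i) (f i),
          curv_flip hR (f i) x]
        ring
      have hsoku : ∀ i, sok R ⇑b (uM i) (uM i) = 2 * R x (f i) x (f i) := by
        intro i
        rw [huM]
        simp only []
        rw [sok_sub_left, sok_sub_right, sok_sub_right, sok_rk, sok_rk, sok_rk, sok_rk]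
        rw [curv_zero12 hR (f i) (f i) (f i), curv_zero12 hR x x x,
          curv_anti34 hR x (f i) (f i) x, curv_anti34 hR (f i) x x (f i),
          curv_flip hR (f i) x]
        ring
      have hric : ∑ i, R x (f i) x (f i) = ric R ⇑b x x := by
        have h2 : ∑ k, (ricB R x) (g k) (g k) = ∑ a, (ricB R x) (b a) (b a) :=
          trace_indep (ricB R x) b g
        have h3 : ric R ⇑b x x = ∑ a, (ricB R x) (b a) (b a) := by
          unfold ric
          exact Finset.sum_congr rfl fun a _ => rfl
        rw [h3, ← h2, Fin.sum_univ_castSucc (f := fun k => (ricB R x) (g k) (g k))]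
        have h4 : (ricB R x) (g (Fin.last m)) (g (Fin.last m)) = 0 := by
          rw [hgx]
          exact curv_zero12 hR x x x
        rw [h4, add_zero]
        exact Finset.sum_congr rfl fun i _ => rfl
      rw [h1, Finset.sum_congr rfl fun i _ => hsokh i,
        Finset.sum_congr rfl fun i _ => hsoku i, ← Finset.mul_sum, hric]
      have hm1 : ((m:ℝ)+1) ≠ 0 := by positivity
      field_simp
    have hfloor : ⌊(↑(m+1) : ℝ) + ((↑(m+1) : ℝ) - 2) / (↑(m+1) : ℝ)⌋₊ < N := by
      have hm1 : (0:ℝ) < (m:ℝ) + 1 := by positivity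
      have hmR : (2:ℝ) ≤ (m:ℝ) := by exact_mod_cast hm2
      have hNR : 2 * (N:ℝ) = (m:ℝ) * ((m:ℝ) + 3) := by exact_mod_cast hNcast
      have hA0 : (0:ℝ) ≤ (↑(m+1) : ℝ) + ((↑(m+1) : ℝ) - 2) / (↑(m+1) : ℝ) := by
        push_cast
        have h12 : (0:ℝ) ≤ ((m:ℝ) + 1 - 2) / ((m:ℝ) + 1) := by
          apply div_nonneg <;> linarith
        linarith
      have hAN : (↑(m+1) : ℝ) + ((↑(m+1) : ℝ) - 2) / (↑(m+1) : ℝ) < (N:ℝ) := by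
        push_cast
        have h13 : ((m:ℝ) + 1 - 2) / ((m:ℝ) + 1) < 1 := by
          rw [div_lt_one hm1]; linarith
        have h14 : (m:ℝ) + 2 ≤ (N:ℝ) := by nlinarith [hNR, hmR]
        linarith
      have h9 := Nat.floor_le hA0
      have h10 : (↑(⌊(↑(m+1) : ℝ) + ((↑(m+1) : ℝ) - 2) / (↑(m+1) : ℝ)⌋₊) : ℝ) < (N:ℝ) :=
        lt_of_le_of_lt h9 hAN
      exact_mod_cast h10
    have happ := psum_le hmono c hc0 hc1 hcsum hfloor
    rw [hclam] at happ
    exact happ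
  have hposfac : (0:ℝ) < 1 + 2/((m:ℝ)+1) := by positivity
  constructor
  · intro hpos x hx0
    have hxn : ‖x‖ ≠ 0 := norm_ne_zero_iff.2 hx0
    have hyn : ‖(‖x‖⁻¹ • x)‖ = 1 := by
      rw [norm_smul, norm_inv, norm_norm, inv_mul_cancel₀ hxn]
    have h1 := main (‖x‖⁻¹ • x) hyn
    have h2 : 0 < ric R ⇑b (‖x‖⁻¹ • x) (‖x‖⁻¹ • x) := by nlinarith [h1, hpos, hposfac]
    have h3 : ric R ⇑b x x = ‖x‖^2 * ric R ⇑b (‖x‖⁻¹ • x) (‖x‖⁻¹ • x) := by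
      conv_lhs => rw [show x = ‖x‖ • (‖x‖⁻¹ • x) by
        rw [smul_smul, mul_inv_cancel₀ hxn, one_smul]]
      rw [ric_smul]
    rw [h3]
    have h4 : (0:ℝ) < ‖x‖^2 := by
      have := norm_pos_iff.2 hx0
      positivity
    nlinarith
  · intro hnn x
    rcases eq_or_ne x 0 with rfl | hx0
    · have h0 : ric R ⇑b (0:V) 0 = 0 := by simp [ric]
      rw [h0]
    · have hxn : ‖x‖ ≠ 0 := norm_ne_zero_iff.2 hx0
      have hyn : ‖(‖x‖⁻¹ • x)‖ = 1 := by
        rw [norm_smul, norm_inv, norm_norm, inv_mul_cancel₀ hxn]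
      have h1 := main (‖x‖⁻¹ • x) hyn
      have h2 : 0 ≤ ric R ⇑b (‖x‖⁻¹ • x) (‖x‖⁻¹ • x) := by nlinarith [h1, hnn, hposfac]
      have h3 : ric R ⇑b x x = ‖x‖^2 * ric R ⇑b (‖x‖⁻¹ • x) (‖x‖⁻¹ • x) := by
        conv_lhs => rw [show x = ‖x‖ • (‖x‖⁻¹ • x) by
          rw [smul_smul, mul_inv_cancel₀ hxn, one_smul]]
        rw [ric_smul]
      rw [h3]
      exact mul_nonneg (sq_nonneg _) h2
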